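/- arXiv:2412.16193 — 2 statements merged into one kernel-verified Lean document; each statement's English description precedes it below -/
import Mathlib

section
/- For a prime p and positive integers k and l, the formal power series identity (∏_{i≥1}(1-q^{ki}))^{p^l} ≡ (∏_{i≥1}(1-q^{pki}))^{p^{l-1}} holds modulo p^l, i.e., all coefficients of the difference are divisible by p^l. -/
noncomputable def fps (k : ℕ) : PowerSeries ℤ :=
  PowerSeries.mk fun n =>
    PowerSeries.coeff n (∏ i ∈ Finset.range (n+1), (1 - PowerSeries.X ^ (k*(i+1))))

/-!
Modulo `p` the Frobenius endomorphism gives `f_k ^ p ≡ f_{pk}`, and a congruence `a ≡ b` modulo `p`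
lifts to `a ^ p ^ l ≡ b ^ p ^ l` modulo `p ^ (l + 1)`. Since the `n`-th coefficient of `f_k` only
involves the first `n + 1` factors, both steps can be carried out on finite products.
-/

open Finset PowerSeries

theorem natCast_dvd_prod_one_sub_pow_sub {R ι : Type*} [CommRing R] {p : ℕ} (hp : p.Prime)
    (s : Finset ι) (x : ι → R) :
    (p : R) ∣ (∏ i ∈ s, (1 - x i)) ^ p - ∏ i ∈ s, (1 - x i ^ p) := by
  -- if `p` is not a unit, `R ⧸ (p)` has characteristic `p` and Frobenius is a ring map there
  by_cases hu : IsUnit (p : R)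
  · exact hu.dvd
  have := Fact.mk hp
  have := CharP.quotient R p hu
  rw [← Ideal.mem_span_singleton, ← Ideal.Quotient.eq_zero_iff_mem, map_sub, sub_eq_zero,
    map_pow, map_prod, map_prod, ← prod_pow]
  refine prod_congr rfl fun i _ => ?_
  simp only [map_sub, map_one, map_pow, sub_pow_char, one_pow]

namespace PowerSeries

variable (R : Type*) [CommRing R]

noncomputable def partialEulerProd (k N : ℕ) : R⟦X⟧ :=
  ∏ i ∈ range N, (1 - X ^ (k * (i + 1)))

variable {R}

theorem X_pow_dvd_partialEulerProd_sub {k M N : ℕ} (hk : 0 < k) (hMN : M ≤ N) :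
    (X : R⟦X⟧) ^ M ∣ partialEulerProd R k N - partialEulerProd R k M := by
  induction N, hMN using Nat.le_induction with
  | base => simp
  | succ N hMN ih =>
    have hX : (X : R⟦X⟧) ^ M ∣ X ^ (k * (N + 1)) := pow_dvd_pow _ (by nlinarith)
    have hsplit : partialEulerProd R k (N + 1) - partialEulerProd R k M =
        (partialEulerProd R k N - partialEulerProd R k M)
          - partialEulerProd R k N * X ^ (k * (N + 1)) := by
      rw [partialEulerProd, prod_range_succ, ← partialEulerProd]
      ring
    rw [hsplit]
    exact dvd_sub ih (hX.mul_left _)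

theorem X_pow_dvd_fps_sub {k : ℕ} (hk : 0 < k) (N : ℕ) :
    X ^ N ∣ fps k - partialEulerProd ℤ k N := by
  rw [X_pow_dvd_iff]
  intro m hm
  have hstable := X_pow_dvd_iff.mp (X_pow_dvd_partialEulerProd_sub (R := ℤ) hk hm) m m.lt_succ_self
  rw [map_sub, sub_eq_zero] at hstable ⊢
  rw [fps, coeff_mk, ← partialEulerProd, hstable]

theorem natCast_pow_dvd_partialEulerProd_sub {p : ℕ} (hp : p.Prime) (k N l : ℕ) :
    (p : R⟦X⟧) ^ (l + 1) ∣
      partialEulerProd R k N ^ p ^ (l + 1) - partialEulerProd R (p * k) N ^ p ^ l := by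
  have hfrob : (p : R⟦X⟧) ∣ partialEulerProd R k N ^ p - partialEulerProd R (p * k) N := by
    have h := natCast_dvd_prod_one_sub_pow_sub hp (range N) fun i => (X : R⟦X⟧) ^ (k * (i + 1))
    simp only [← pow_mul] at h
    rw [partialEulerProd, partialEulerProd]
    convert h using 5 with i
    ring
  simpa only [← pow_mul, ← pow_succ'] using dvd_sub_pow_of_dvd_sub hfrob l

end PowerSeries

theorem stmt1 (p : ℕ) (hp : p.Prime) (k l : ℕ) (hk : 0 < k) (hl : 0 < l) (n : ℕ) :
    ((p : ℤ) ^ l) ∣ PowerSeries.coeff n (fps k ^ (p ^ l) - fps (p * k) ^ (p ^ (l - 1))) := by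
  obtain ⟨l, rfl⟩ := Nat.exists_eq_add_of_lt hl
  simp only [zero_add, Nat.add_sub_cancel]
  set A := partialEulerProd ℤ k (n + 1)
  set B := partialEulerProd ℤ (p * k) (n + 1)
  have htrunc : X ^ (n + 1) ∣
      (fps k ^ p ^ (l + 1) - fps (p * k) ^ p ^ l) - (A ^ p ^ (l + 1) - B ^ p ^ l) := by
    rw [sub_sub_sub_comm]
    exact dvd_sub ((X_pow_dvd_fps_sub hk _).trans (sub_dvd_pow_sub_pow _ _ _))
      ((X_pow_dvd_fps_sub (Nat.mul_pos hp.pos hk) _).trans (sub_dvd_pow_sub_pow _ _ _))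
  obtain ⟨g, hg⟩ := natCast_pow_dvd_partialEulerProd_sub (R := ℤ) hp k (n + 1) l
  have hcoeff := X_pow_dvd_iff.mp htrunc n n.lt_succ_self
  rw [map_sub, sub_eq_zero, hg, ← map_natCast C, ← map_pow, coeff_C_mul] at hcoeff
  exact hcoeff ▸ dvd_mul_right _ _
end

section
/- Let p ≥ 3 be a prime and let r with 1 ≤ r ≤ p−1 be such that 8r+1 is a quadratic nonresidue modulo p. Then for all n ≥ 0, T_2(9(pn+r)+1) ≡ 0 (mod 6). -/
noncomputable def Tcount (ℓ k n : ℕ) : ℕ :=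
  Nat.card {f : Fin k → Σ m : ℕ, Nat.Partition m //
    (∑ i, (f i).1) = n ∧ ∀ i, ∀ p ∈ (f i).2.parts, ¬ ℓ ∣ p}

/-!
Write `N = 9 (p n + r) + 1`. Rotating a triple of partitions of total size `N` has no fixed
point since `3 ∤ N`, so `3 ∣ T_2(N)`.

For the parity, Euler's theorem turns the three partitions into odd parts into sets `A, S, T`
of positive integers. Record `(S, T)` as the finite set `U = S ∪ (-T) ⊆ ℤ`, with `0` added when
this makes `#U` odd. Write `charge U = #{u > 0} - #{u ≤ 0}` and `weight U = ∑ |u|`. This is the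
combinatorics of Jacobi's triple product: `U` is a Maya diagram, and translating it maps charge
`c` to `0` while lowering the weight by `c (c + 1) / 2`. Hence `T_2(N)` is a sum, over odd `c`,
of the numbers of pairs `(A, U)` with `charge U = 0` and weight `N - c (c + 1) / 2`. The
involution `U ↦ 1 - U` shows that each of these counts has the parity of the number of pairs
`(A, O)`, with `O` a set of odd numbers, of the same weight. Exchanging `O` with the odd elements
of `A` reduces weight `m` to weight `m / 2`, so such a count is odd only for weight `0`.
So `T_2(N)` odd forces `2 N = c (c + 1)`, i.e. `8 N + 1 = (2 c + 1) ^ 2`. Then `3 ∣ 2 c + 1`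
makes `8 (p n + r) + 1` a square, and so `8 r + 1` is a square modulo `p`.
-/

open Finset
open scoped symmDiff

theorem Finset.card_modEq_card_filter_apply_eq {α : Type*} [DecidableEq α] {p : ℕ}
    [Fact p.Prime] {s : Finset α} {g : α → α} (hg : Set.MapsTo g s s)
    (hgp : ∀ a ∈ s, g^[p] a = a) : #s ≡ #{a ∈ s | g a = a} [MOD p] := by
  let f : Function.End s := hg.restrict g s s
  have hf : f ^ p ^ 1 = 1 := by
    funext x
    change f^[p ^ 1] x = x
    rw [pow_one, hg.iterate_restrict]
    exact Subtype.ext (hgp x x.2)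
  have hfix : Function.fixedPoints f ≃ {a ∈ s | g a = a} :=
    ((Equiv.subtypeEquivRight fun _ => Subtype.ext_iff).trans
      (Equiv.subtypeSubtypeEquivSubtypeInter (· ∈ s) (fun a => g a = a))).trans
      (Equiv.subtypeEquivRight fun a => by simp)
  have key := Equiv.Perm.card_fixedPoints_modEq hf
  rwa [Fintype.card_coe, Fintype.card_congr hfix, Fintype.card_coe] at key

theorem Finset.sum_symmDiff_singleton {α M : Type*} [DecidableEq α] [AddCommGroup M]
    (s : Finset α) (a : α) (f : α → M) :
    ∑ x ∈ s ∆ {a}, f x = ∑ x ∈ s, f x + if a ∈ s then -f a else f a := by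
  split_ifs with ha
  · rw [show s ∆ {a} = s.erase a by ext; simp [mem_symmDiff]; grind,
      ← sum_erase_add _ _ ha]
    abel
  · rw [show s ∆ {a} = insert a s by ext; simp [mem_symmDiff]; grind, sum_insert ha, add_comm]

namespace Finset

lemma subset_range_of_sum_le {S : Finset ℕ} {n : ℕ} (h : ∑ x ∈ S, x ≤ n) :
    S ⊆ range (n + 1) := fun _ hx =>
  mem_range.2 (Nat.lt_succ_of_le ((single_le_sum (fun _ _ => Nat.zero_le _) hx).trans h))

lemma filter_even_union {E O : Finset ℕ} (hE : ∀ e ∈ E, Even e) (hO : ∀ o ∈ O, Odd o) :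
    {a ∈ E ∪ O | Even a} = E := by
  rw [filter_union, filter_true_of_mem hE,
    filter_false_of_mem fun o ho => Nat.not_even_iff_odd.2 (hO o ho), union_empty]

lemma filter_odd_union {E O : Finset ℕ} (hE : ∀ e ∈ E, Even e) (hO : ∀ o ∈ O, Odd o) :
    {a ∈ E ∪ O | Odd a} = O := by
  rw [filter_union, filter_true_of_mem hO,
    filter_false_of_mem fun e he => Nat.not_odd_iff_even.2 (hE e he), empty_union]

lemma disjoint_of_even_of_odd {E O : Finset ℕ} (hE : ∀ e ∈ E, Even e) (hO : ∀ o ∈ O, Odd o) :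
    Disjoint E O :=
  disjoint_left.2 fun a ha ha' => Nat.not_even_iff_odd.2 (hO a ha') (hE a ha)

lemma sum_filter_even_add_sum_filter_odd (A : Finset ℕ) :
    ∑ a ∈ {a ∈ A | Even a}, a + ∑ a ∈ {a ∈ A | Odd a}, a = ∑ a ∈ A, a := by
  rw [← sum_filter_add_sum_filter_not A Even]
  simp only [Nat.not_even_iff_odd]

lemma two_mul_sum_image_half {E : Finset ℕ} (hE : ∀ e ∈ E, Even e) :
    2 * ∑ b ∈ E.image (· / 2), b = ∑ e ∈ E, e := by
  rw [sum_image fun a ha b hb hab => by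
    have := Nat.even_iff.1 (hE a ha); have := Nat.even_iff.1 (hE b hb); omega, mul_sum]
  exact sum_congr rfl fun e he => by have := Nat.even_iff.1 (hE e he); omega

lemma sum_image_double (B : Finset ℕ) : ∑ a ∈ B.image (2 * ·), a = 2 * ∑ b ∈ B, b := by
  rw [sum_image fun a _ b _ hab => by simp at hab; omega, mul_sum]

lemma even_of_mem_image_double {B : Finset ℕ} : ∀ e ∈ B.image (2 * ·), Even e := by
  simp only [mem_image]
  rintro _ ⟨b, -, rfl⟩
  exact even_two_mul b

lemma image_half_image_double (B : Finset ℕ) : (B.image (2 * ·)).image (· / 2) = B := by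
  rw [image_image]
  conv_rhs => rw [← image_id (s := B)]
  exact image_congr fun b _ => by simp only [Function.comp, id]; omega

lemma image_double_image_half {E : Finset ℕ} (hE : ∀ e ∈ E, Even e) :
    (E.image (· / 2)).image (2 * ·) = E := by
  rw [image_image]
  conv_rhs => rw [← image_id (s := E)]
  exact image_congr fun e he => by
    have := Nat.even_iff.1 (hE e he); simp only [Function.comp, id]; omega

end Finset

namespace Nat.Partition

def distinctEquivFinset :
    (Σ m : ℕ, {c : m.Partition // c.parts.Nodup}) ≃ {S : Finset ℕ // 0 ∉ S} where
  toFun x := ⟨⟨x.2.1.parts, x.2.2⟩, fun h => (x.2.1.parts_pos h).ne' rfl⟩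
  invFun S := ⟨S.1.val.sum, ⟨⟨S.1.val, fun hi => Nat.pos_of_ne_zero (ne_of_mem_of_not_mem hi S.2),
    rfl⟩, S.1.nodup⟩⟩
  left_inv := by rintro ⟨m, ⟨parts, pos, rfl⟩, hnd⟩; rfl
  right_inv _ := rfl

lemma sum_distinctEquivFinset (x : Σ m : ℕ, {c : m.Partition // c.parts.Nodup}) :
    ∑ i ∈ (distinctEquivFinset x).1, i = x.1 :=
  (sum_val _).symm.trans x.2.1.parts_sum

lemma card_subtype_odd_eq_card_subtype_nodup (m : ℕ) :
    Fintype.card {c : m.Partition // ∀ i ∈ c.parts, ¬ 2 ∣ i} =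
      Fintype.card {c : m.Partition // c.parts.Nodup} := by
  simpa [Fintype.card_subtype, odds, distincts, restricted, even_iff_two_dvd] using
    card_odds_eq_card_distincts m

noncomputable def oddEquivFinset :
    (Σ m : ℕ, {c : m.Partition // ∀ i ∈ c.parts, ¬ 2 ∣ i}) ≃ {S : Finset ℕ // 0 ∉ S} :=
  (Equiv.sigmaCongrRight fun m =>
    Fintype.equivOfCardEq (card_subtype_odd_eq_card_subtype_nodup m)).trans distinctEquivFinset

lemma sum_oddEquivFinset (x : Σ m : ℕ, {c : m.Partition // ∀ i ∈ c.parts, ¬ 2 ∣ i}) :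
    ∑ i ∈ (oddEquivFinset x).1, i = x.1 := by
  rw [oddEquivFinset, Equiv.trans_apply, sum_distinctEquivFinset]
  rfl

end Nat.Partition

/-! A finite set `U ⊆ ℤ` encodes the pair of sets `{u ∈ U | 0 < u}` and `{-u | u ∈ U, u ≤ 0}`
(the second may contain `0`). It corresponds to the Maya diagram `(U - 1) ∆ {x | x < 0}`, on
which `shift` acts as translation by `-1`. -/

namespace Maya

def charge (U : Finset ℤ) : ℤ := ∑ u ∈ U, if 0 < u then 1 else -1

def weight (U : Finset ℤ) : ℕ := ∑ u ∈ U, u.natAbs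

def shift : Equiv.Perm (Finset ℤ) :=
  (Equiv.subRight (1 : ℤ)).finsetCongr.trans
    (Function.Involutive.toPerm (· ∆ {0}) fun V => symmDiff_symmDiff_cancel_right {0} V)

lemma shift_apply (U : Finset ℤ) : shift U = U.map (Equiv.subRight 1).toEmbedding ∆ {0} := rfl

lemma charge_shift (U : Finset ℤ) : charge (shift U) = charge U - 1 := by
  have hχ (u : ℤ) : (if 0 < u - 1 then 1 else -1 : ℤ) =
      (if 0 < u then 1 else -1) - if u = 1 then 2 else 0 := by
    split_ifs <;> omega
  rw [charge, shift_apply, sum_symmDiff_singleton, sum_map]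
  simp only [Equiv.coe_toEmbedding, Equiv.subRight_apply, hχ, sum_sub_distrib, sum_ite_eq',
    mem_map_equiv, Equiv.subRight_symm_apply, zero_add, charge]
  by_cases h : 1 ∈ U <;> simp [h] <;> ring

lemma weight_shift (U : Finset ℤ) : (weight (shift U) : ℤ) = weight U - charge U := by
  simp only [weight, charge, Nat.cast_sum]
  rw [shift_apply, sum_symmDiff_singleton, sum_map, ← sum_sub_distrib]
  simp only [Equiv.coe_toEmbedding, Equiv.subRight_apply, Int.natAbs_zero, Nat.cast_zero,
    neg_zero, ite_self, add_zero]
  exact sum_congr rfl fun u _ => by split_ifs <;> omega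

lemma charge_zpow_shift (k : ℤ) (U : Finset ℤ) : charge ((shift ^ k) U) = charge U - k := by
  induction k using Int.induction_on with
  | zero => simp
  | succ k ih => rw [add_comm, zpow_one_add, Equiv.Perm.mul_apply, charge_shift, ih]; ring
  | pred k ih =>
    have h := charge_shift ((shift ^ (-(k : ℤ) - 1)) U)
    rw [← Equiv.Perm.mul_apply, ← zpow_one_add, add_sub_cancel, ih] at h
    linarith

lemma weight_zpow_shift (k : ℤ) (U : Finset ℤ) :
    2 * (weight ((shift ^ k) U) : ℤ) = 2 * weight U - 2 * k * charge U + k * (k - 1) := by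
  induction k using Int.induction_on with
  | zero => simp
  | succ k ih =>
    rw [add_comm, zpow_one_add, Equiv.Perm.mul_apply, weight_shift, charge_zpow_shift]
    linear_combination ih
  | pred k ih =>
    have h := weight_shift ((shift ^ (-(k : ℤ) - 1)) U)
    rw [← Equiv.Perm.mul_apply, ← zpow_one_add, add_sub_cancel, charge_zpow_shift] at h
    linear_combination ih - 2 * h

lemma odd_charge_iff (U : Finset ℤ) : Odd (charge U) ↔ Odd #U := by
  have h := card_filter_add_card_filter_not (s := U) (fun u => 0 < u)
  rw [charge, sum_ite, sum_const, sum_const, Int.odd_iff, Nat.odd_iff]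
  simp only [nsmul_eq_mul, mul_one, mul_neg]
  omega

lemma subset_Icc_of_weight_le {U : Finset ℤ} {n : ℕ} (h : weight U ≤ n) :
    U ⊆ Icc (-n : ℤ) n := fun u hu => by
  have := (single_le_sum (f := fun u : ℤ => u.natAbs) (fun _ _ => Nat.zero_le _) hu).trans h
  rw [mem_Icc]
  omega

lemma weight_insert_zero (U : Finset ℤ) : weight (insert 0 U) = weight U := by
  by_cases h : (0 : ℤ) ∈ U
  · rw [insert_eq_of_mem h]
  · rw [weight, sum_insert h, Int.natAbs_zero, zero_add, weight]

lemma weight_erase_zero (U : Finset ℤ) : weight (U.erase 0) = weight U := by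
  by_cases h : (0 : ℤ) ∈ U
  · rw [← weight_insert_zero, insert_erase h]
  · rw [erase_eq_of_notMem h]

def ofPair (S T : Finset ℕ) : Finset ℤ := S.image (↑) ∪ T.image fun t => -↑t

def posPart (U : Finset ℤ) : Finset ℕ := {u ∈ U | 0 < u}.image Int.toNat

def negPart (U : Finset ℤ) : Finset ℕ := {u ∈ U | u < 0}.image fun u => (-u).toNat

lemma posPart_ofPair {S : Finset ℕ} (T : Finset ℕ) (hS : 0 ∉ S) : posPart (ofPair S T) = S := by
  ext x
  simp only [posPart, ofPair, mem_image, mem_filter, mem_union]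
  constructor
  · rintro ⟨_, ⟨⟨s, hs, rfl⟩ | ⟨t, -, rfl⟩, h⟩, rfl⟩ <;> simp_all
    omega
  · intro hx
    exact ⟨x, ⟨Or.inl ⟨x, hx, rfl⟩, by have := ne_of_mem_of_not_mem hx hS; omega⟩, rfl⟩

lemma negPart_ofPair (S : Finset ℕ) {T : Finset ℕ} (hT : 0 ∉ T) : negPart (ofPair S T) = T := by
  ext x
  simp only [negPart, ofPair, mem_image, mem_filter, mem_union]
  constructor
  · rintro ⟨_, ⟨⟨s, -, rfl⟩ | ⟨t, ht, rfl⟩, h⟩, rfl⟩ <;> simp_all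
    omega
  · intro hx
    exact ⟨-x, ⟨Or.inr ⟨x, hx, rfl⟩, by have := ne_of_mem_of_not_mem hx hT; omega⟩, by simp⟩

lemma ofPair_posPart_negPart (U : Finset ℤ) : ofPair (posPart U) (negPart U) = U.erase 0 := by
  ext u
  simp only [ofPair, posPart, negPart, mem_union, mem_image, mem_filter, mem_erase]
  constructor
  · rintro (⟨_, ⟨v, ⟨hv, hv0⟩, rfl⟩, rfl⟩ | ⟨_, ⟨v, ⟨hv, hv0⟩, rfl⟩, rfl⟩)
    · exact ⟨by omega, by rwa [Int.toNat_of_nonneg hv0.le]⟩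
    · exact ⟨by omega, by rwa [Int.toNat_of_nonneg (by omega : 0 ≤ -v), neg_neg]⟩
  · rintro ⟨hu0, hu⟩
    rcases lt_or_gt_of_ne hu0 with h | h
    · exact Or.inr ⟨_, ⟨u, ⟨hu, h⟩, rfl⟩, by omega⟩
    · exact Or.inl ⟨_, ⟨u, ⟨hu, h⟩, rfl⟩, by omega⟩

lemma zero_notMem_posPart (U : Finset ℤ) : 0 ∉ posPart U := by
  simp only [posPart, mem_image, mem_filter, not_exists, not_and, and_imp]
  intro u _ hu
  omega

lemma zero_notMem_negPart (U : Finset ℤ) : 0 ∉ negPart U := by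
  simp only [negPart, mem_image, mem_filter, not_exists, not_and, and_imp]
  intro u _ hu
  omega

lemma posPart_insert_zero (U : Finset ℤ) : posPart (insert 0 U) = posPart U := by
  simp [posPart, filter_insert]

lemma negPart_insert_zero (U : Finset ℤ) : negPart (insert 0 U) = negPart U := by
  simp [negPart, filter_insert]

lemma zero_notMem_ofPair {S T : Finset ℕ} (hS : 0 ∉ S) (hT : 0 ∉ T) :
    (0 : ℤ) ∉ ofPair S T := by
  simp [ofPair, hS, hT]

lemma disjoint_ofPair {S : Finset ℕ} (T : Finset ℕ) (hS : 0 ∉ S) :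
    Disjoint (S.image ((↑) : ℕ → ℤ)) (T.image fun t : ℕ => -(t : ℤ)) := by
  rw [disjoint_left]
  intro u hu hu'
  obtain ⟨s, hs, rfl⟩ := mem_image.1 hu
  obtain ⟨t, -, h⟩ := mem_image.1 hu'
  have := ne_of_mem_of_not_mem hs hS
  omega

lemma weight_ofPair {S : Finset ℕ} (T : Finset ℕ) (hS : 0 ∉ S) :
    weight (ofPair S T) = ∑ s ∈ S, s + ∑ t ∈ T, t := by
  rw [weight, ofPair, sum_union (disjoint_ofPair T hS),
    sum_image fun _ _ _ _ h => Nat.cast_injective h,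
    sum_image fun _ _ _ _ h => by simpa using h]
  simp

def oddify (V : Finset ℤ) : Finset ℤ := if Even #V then insert 0 V else V

lemma odd_card_oddify {V : Finset ℤ} (hV : (0 : ℤ) ∉ V) : Odd #(oddify V) := by
  unfold oddify
  split_ifs with h
  · rw [card_insert_of_notMem hV]
    exact h.add_one
  · exact Nat.not_even_iff_odd.1 h

lemma weight_oddify (V : Finset ℤ) : weight (oddify V) = weight V := by
  unfold oddify
  split_ifs
  · exact weight_insert_zero V
  · rfl

lemma posPart_oddify (V : Finset ℤ) : posPart (oddify V) = posPart V := by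
  unfold oddify
  split_ifs
  · exact posPart_insert_zero V
  · rfl

lemma negPart_oddify (V : Finset ℤ) : negPart (oddify V) = negPart V := by
  unfold oddify
  split_ifs
  · exact negPart_insert_zero V
  · rfl

lemma oddify_erase_zero {U : Finset ℤ} (hU : Odd #U) : oddify (U.erase 0) = U := by
  unfold oddify
  by_cases h : (0 : ℤ) ∈ U
  · have : Even #(U.erase 0) := by
      rw [card_erase_of_mem h]
      obtain ⟨k, hk⟩ := hU
      exact ⟨k, by omega⟩
    rw [if_pos this, insert_erase h]
  · rw [erase_eq_of_notMem h, if_neg (Nat.not_even_iff_odd.2 hU)]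

def conj (U : Finset ℤ) : Finset ℤ := U.map (Equiv.subLeft 1).toEmbedding

lemma mem_conj {U : Finset ℤ} {u : ℤ} : u ∈ conj U ↔ 1 - u ∈ U := by
  simp [conj, sub_eq_neg_add]

lemma conj_conj (U : Finset ℤ) : conj (conj U) = U := by
  simp [conj, map_map]

lemma charge_conj (U : Finset ℤ) : charge (conj U) = -charge U := by
  rw [charge, conj, sum_map, charge, ← sum_neg_distrib]
  refine sum_congr rfl fun u _ => ?_
  simp only [Equiv.coe_toEmbedding, Equiv.subLeft_apply]
  split_ifs <;> omega

lemma weight_conj (U : Finset ℤ) : (weight (conj U) : ℤ) = weight U - charge U := by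
  simp only [weight, charge, conj, Nat.cast_sum, sum_map, ← sum_sub_distrib]
  refine sum_congr rfl fun u _ => ?_
  simp only [Equiv.coe_toEmbedding, Equiv.subLeft_apply]
  split_ifs <;> omega

lemma disjoint_conj {P : Finset ℤ} (hP : ∀ p ∈ P, 0 < p) : Disjoint P (conj P) := by
  rw [disjoint_left]
  intro u hu hu'
  have := hP _ (mem_conj.1 hu')
  have := hP u hu
  omega

lemma eq_union_conj_of_conj_eq {U : Finset ℤ} (h : conj U = U) :
    U = {u ∈ U | 0 < u} ∪ conj {u ∈ U | 0 < u} := by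
  ext u
  have hu : 1 - u ∈ U ↔ u ∈ U := by rw [← mem_conj, h]
  simp only [mem_union, mem_filter, mem_conj]
  by_cases h0 : 0 < u
  · simp [h0]
    omega
  · simp [h0, hu]
    omega

lemma charge_union_conj {P : Finset ℤ} (hP : ∀ p ∈ P, 0 < p) : charge (P ∪ conj P) = 0 := by
  rw [charge, sum_union (disjoint_conj hP), ← charge, ← charge, charge_conj, add_neg_cancel]

lemma weight_union_conj {P : Finset ℤ} (hP : ∀ p ∈ P, 0 < p) :
    weight (P ∪ conj P) = ∑ p ∈ P, (2 * p - 1).natAbs := by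
  rw [weight, sum_union (disjoint_conj hP), conj, sum_map, ← sum_add_distrib]
  refine sum_congr rfl fun p hp => ?_
  have := hP p hp
  simp only [Equiv.coe_toEmbedding, Equiv.subLeft_apply]
  omega

/-- For `conj U = U` these are the diagonal hook lengths of the self-conjugate partition. -/
def diagonalHooks (U : Finset ℤ) : Finset ℕ :=
  {u ∈ U | 0 < u}.image fun u => (2 * u - 1).natAbs

def ofDiagonalHooks (O : Finset ℕ) : Finset ℤ :=
  O.image (fun o : ℕ => ((o : ℤ) + 1) / 2) ∪ conj (O.image fun o : ℕ => ((o : ℤ) + 1) / 2)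

lemma odd_of_mem_diagonalHooks {U : Finset ℤ} {o : ℕ} (ho : o ∈ diagonalHooks U) : Odd o := by
  obtain ⟨u, -, rfl⟩ := mem_image.1 ho
  exact Int.natAbs_odd.2 ⟨u - 1, by ring⟩

lemma sum_diagonalHooks {U : Finset ℤ} (h : conj U = U) :
    ∑ o ∈ diagonalHooks U, o = weight U := by
  rw [diagonalHooks, sum_image fun u hu v hv huv => by
    have := (mem_filter.1 hu).2; have := (mem_filter.1 hv).2; omega]
  conv_rhs => rw [eq_union_conj_of_conj_eq h]
  exact (weight_union_conj fun u hu => (mem_filter.1 hu).2).symm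

lemma pos_of_mem_image_half {O : Finset ℕ} (hO : ∀ o ∈ O, Odd o) {p : ℤ}
    (hp : p ∈ O.image fun o : ℕ => ((o : ℤ) + 1) / 2) : 0 < p := by
  obtain ⟨o, ho, rfl⟩ := mem_image.1 hp
  have := (hO o ho).pos
  omega

lemma conj_ofDiagonalHooks (O : Finset ℕ) : conj (ofDiagonalHooks O) = ofDiagonalHooks O := by
  rw [ofDiagonalHooks, conj, map_union, ← conj, ← conj, conj_conj, union_comm]

lemma charge_ofDiagonalHooks {O : Finset ℕ} (hO : ∀ o ∈ O, Odd o) :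
    charge (ofDiagonalHooks O) = 0 :=
  charge_union_conj fun _ => pos_of_mem_image_half hO

lemma weight_ofDiagonalHooks {O : Finset ℕ} (hO : ∀ o ∈ O, Odd o) :
    weight (ofDiagonalHooks O) = ∑ o ∈ O, o := by
  rw [ofDiagonalHooks, weight_union_conj fun _ => pos_of_mem_image_half hO,
    sum_image fun a ha b hb hab => by
      have := Nat.odd_iff.1 (hO a ha); have := Nat.odd_iff.1 (hO b hb); omega]
  refine sum_congr rfl fun o ho => ?_
  have := Nat.odd_iff.1 (hO o ho)
  omega

lemma ofDiagonalHooks_diagonalHooks {U : Finset ℤ} (h : conj U = U) :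
    ofDiagonalHooks (diagonalHooks U) = U := by
  have hP : (diagonalHooks U).image (fun o : ℕ => ((o : ℤ) + 1) / 2) = {u ∈ U | 0 < u} := by
    rw [diagonalHooks, image_image]
    conv_rhs => rw [← image_id (s := {u ∈ U | 0 < u})]
    exact image_congr fun u hu => by
      have := (mem_filter.1 hu).2; simp only [Function.comp, id]; omega
  rw [ofDiagonalHooks, hP, ← eq_union_conj_of_conj_eq h]

lemma diagonalHooks_ofDiagonalHooks {O : Finset ℕ} (hO : ∀ o ∈ O, Odd o) :
    diagonalHooks (ofDiagonalHooks O) = O := by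
  have hpos := fun p => pos_of_mem_image_half hO (p := p)
  rw [diagonalHooks, ofDiagonalHooks, filter_union, filter_true_of_mem fun p hp => hpos p hp,
    filter_false_of_mem fun u hu => by have := hpos _ (mem_conj.1 hu); omega, union_empty,
    image_image]
  conv_rhs => rw [← image_id (s := O)]
  exact image_congr fun o ho => by
    have := Nat.odd_iff.1 (hO o ho); simp only [Function.comp, id]; omega

end Maya

namespace Tcount

def distinctTriples (n : ℕ) : Finset (Fin 3 → Finset ℕ) :=
  (Fintype.piFinset fun _ => (range (n + 1)).powerset).filter
    fun F => (∀ i, 0 ∉ F i) ∧ ∑ i, ∑ x ∈ F i, x = n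

lemma mem_distinctTriples {n : ℕ} {F : Fin 3 → Finset ℕ} :
    F ∈ distinctTriples n ↔ (∀ i, 0 ∉ F i) ∧ ∑ i, ∑ x ∈ F i, x = n := by
  refine mem_filter.trans (and_iff_right_of_imp fun h => Fintype.mem_piFinset.2 fun i =>
    mem_powerset.2 (subset_range_of_sum_le ?_))
  rw [← h.2]
  exact single_le_sum (f := fun i => ∑ x ∈ F i, x) (fun _ _ => Nat.zero_le _) (mem_univ i)

open Nat.Partition in
theorem two_three_eq_card_distinctTriples (n : ℕ) : Tcount 2 3 n = #(distinctTriples n) := by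
  rw [Tcount, ← Nat.card_eq_finsetCard]
  refine Nat.card_congr
    { toFun f := ⟨fun i => (oddEquivFinset ⟨(f.1 i).1, (f.1 i).2, f.2.2 i⟩).1, ?_⟩
      invFun F := ⟨fun i => ⟨(oddEquivFinset.symm ⟨F.1 i, (mem_distinctTriples.1 F.2).1 i⟩).1,
        (oddEquivFinset.symm ⟨F.1 i, (mem_distinctTriples.1 F.2).1 i⟩).2.1⟩, ?_⟩
      left_inv f := ?_
      right_inv F := ?_ }
  · exact mem_distinctTriples.2 ⟨fun i => (oddEquivFinset _).2, by
      simp only [sum_oddEquivFinset]; exact f.2.1⟩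
  · refine ⟨?_, fun i => (oddEquivFinset.symm _).2.2⟩
    simp only [← sum_oddEquivFinset, Equiv.apply_symm_apply]
    exact (mem_distinctTriples.1 F.2).2
  · apply Subtype.ext
    funext i
    exact congrArg (fun y => (⟨y.1, y.2.1⟩ : Σ m : ℕ, m.Partition))
      (oddEquivFinset.symm_apply_apply ⟨(f.1 i).1, (f.1 i).2, f.2.2 i⟩)
  · apply Subtype.ext
    funext i
    simp

theorem three_dvd_card_distinctTriples {n : ℕ} (hn : ¬ 3 ∣ n) : 3 ∣ #(distinctTriples n) := by
  have : Fact (Nat.Prime 3) := ⟨Nat.prime_three⟩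
  have key := card_modEq_card_filter_apply_eq (p := 3) (s := distinctTriples n)
    (g := fun F i => F (i + 1)) (fun F hF => ?_) (fun F _ => ?_)
  · rw [filter_false_of_mem, card_empty] at key
    · exact Nat.modEq_zero_iff_dvd.1 key
    intro F hF hfix
    have h01 : F 1 = F 0 := congrFun hfix 0
    have h12 : F 2 = F 1 := congrFun hfix 1
    have hsum := (mem_distinctTriples.1 hF).2
    rw [Fin.sum_univ_three, h12, h01] at hsum
    omega
  · obtain ⟨hpos, hsum⟩ := mem_distinctTriples.1 hF
    refine mem_distinctTriples.2 ⟨fun i => hpos _, ?_⟩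
    rw [← hsum]
    exact Equiv.sum_comp (Equiv.addRight (1 : Fin 3)) fun i => ∑ x ∈ F i, x
  · funext i
    fin_cases i <;> rfl

open Maya

noncomputable def pairsOfWeight (n : ℕ) : Finset (Finset ℕ × Finset ℤ) :=
  ((range (n + 1)).powerset ×ˢ (Icc (-n : ℤ) n).powerset).filter
    fun x => ∑ a ∈ x.1, a + weight x.2 = n

lemma mem_pairsOfWeight {n : ℕ} {x : Finset ℕ × Finset ℤ} :
    x ∈ pairsOfWeight n ↔ ∑ a ∈ x.1, a + weight x.2 = n := by
  refine mem_filter.trans (and_iff_right_of_imp fun h => mem_product.2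
    ⟨mem_powerset.2 (subset_range_of_sum_le ?_), mem_powerset.2 (subset_Icc_of_weight_le ?_)⟩) <;>
  omega

noncomputable def oddChargeConfigs (n : ℕ) : Finset (Finset ℕ × Finset ℤ) :=
  {x ∈ pairsOfWeight n | 0 ∉ x.1 ∧ Odd #x.2}

noncomputable def neutralConfigs (n : ℕ) : Finset (Finset ℕ × Finset ℤ) :=
  {x ∈ pairsOfWeight n | 0 ∉ x.1 ∧ charge x.2 = 0}

def oddPartConfigs (m : ℕ) : Finset (Finset ℕ × Finset ℕ) :=
  ((range (m + 1)).powerset ×ˢ (range (m + 1)).powerset).filter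
    fun x => 0 ∉ x.1 ∧ (∀ o ∈ x.2, Odd o) ∧ ∑ a ∈ x.1, a + ∑ o ∈ x.2, o = m

lemma mem_oddChargeConfigs {n : ℕ} {x : Finset ℕ × Finset ℤ} :
    x ∈ oddChargeConfigs n ↔ 0 ∉ x.1 ∧ Odd #x.2 ∧ ∑ a ∈ x.1, a + weight x.2 = n := by
  rw [oddChargeConfigs, mem_filter, mem_pairsOfWeight]
  tauto

lemma mem_neutralConfigs {n : ℕ} {x : Finset ℕ × Finset ℤ} :
    x ∈ neutralConfigs n ↔ 0 ∉ x.1 ∧ charge x.2 = 0 ∧ ∑ a ∈ x.1, a + weight x.2 = n := by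
  rw [neutralConfigs, mem_filter, mem_pairsOfWeight]
  tauto

lemma mem_oddPartConfigs {m : ℕ} {x : Finset ℕ × Finset ℕ} :
    x ∈ oddPartConfigs m ↔ 0 ∉ x.1 ∧ (∀ o ∈ x.2, Odd o) ∧ ∑ a ∈ x.1, a + ∑ o ∈ x.2, o = m := by
  refine mem_filter.trans (and_iff_right_of_imp fun h => mem_product.2
    ⟨mem_powerset.2 (subset_range_of_sum_le ?_), mem_powerset.2 (subset_range_of_sum_le ?_)⟩) <;>
  omega

lemma card_distinctTriples_eq (n : ℕ) : #(distinctTriples n) = #(oddChargeConfigs n) := by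
  refine card_nbij' (fun F => (F 0, oddify (ofPair (F 1) (F 2))))
    (fun x => ![x.1, posPart x.2, negPart x.2]) (fun F hF => ?_) (fun x hx => ?_)
    (fun F hF => ?_) (fun x hx => ?_) <;> dsimp only
  · obtain ⟨hpos, hsum⟩ := mem_distinctTriples.1 hF
    rw [Fin.sum_univ_three] at hsum
    refine mem_oddChargeConfigs.2
      ⟨hpos 0, odd_card_oddify (zero_notMem_ofPair (hpos 1) (hpos 2)), ?_⟩
    dsimp only
    rw [weight_oddify, weight_ofPair _ (hpos 1)]
    omega
  · obtain ⟨hA, -, hsum⟩ := mem_oddChargeConfigs.1 hx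
    refine mem_distinctTriples.2 ⟨fun i => ?_, ?_⟩
    · fin_cases i
      exacts [hA, zero_notMem_posPart _, zero_notMem_negPart _]
    · rw [Fin.sum_univ_three]
      have := weight_ofPair (negPart x.2) (zero_notMem_posPart x.2)
      rw [ofPair_posPart_negPart, weight_erase_zero] at this
      simp only [Matrix.cons_val_zero, Matrix.cons_val_one, Matrix.cons_val_two,
        Matrix.head_cons, Matrix.tail_cons]
      omega
  · have hpos := (mem_distinctTriples.1 hF).1
    funext i
    fin_cases i
    · rfl
    · simp [posPart_oddify, posPart_ofPair _ (hpos 1)]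
    · simp [negPart_oddify, negPart_ofPair _ (hpos 2)]
  · simp only [Matrix.cons_val_zero, Matrix.cons_val_one, Matrix.cons_val_two, Matrix.head_cons,
      Matrix.tail_cons, ofPair_posPart_negPart, oddify_erase_zero (mem_oddChargeConfigs.1 hx).2.1]

lemma card_filter_charge_eq {n m : ℕ} {c : ℤ} (hc : Odd c)
    (hm : 2 * (m : ℤ) + c * (c + 1) = 2 * n) :
    #{x ∈ oddChargeConfigs n | charge x.2 = c} = #(neutralConfigs m) := by
  refine card_nbij' (fun x => (x.1, (shift ^ c) x.2)) (fun x => (x.1, (shift ^ (-c)) x.2))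
    (fun x hx => ?_) (fun x hx => ?_) (fun x _ => ?_) (fun x _ => ?_)
  · obtain ⟨hx, hcx⟩ := mem_filter.1 hx
    obtain ⟨hA, -, hsum⟩ := mem_oddChargeConfigs.1 hx
    have hw := weight_zpow_shift c x.2
    rw [hcx] at hw
    refine mem_neutralConfigs.2 ⟨hA, by rw [charge_zpow_shift, hcx, sub_self], ?_⟩
    have hsum' : ((∑ a ∈ x.1, a : ℕ) : ℤ) + weight x.2 = n := by rw [← hsum, Nat.cast_add]
    have : 2 * (((∑ a ∈ x.1, a : ℕ) : ℤ) + weight ((shift ^ c) x.2)) = 2 * m := by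
      linear_combination hw + 2 * hsum' - hm
    dsimp only
    omega
  · obtain ⟨hA, hcx, hsum⟩ := mem_neutralConfigs.1 hx
    have hw := weight_zpow_shift (-c) x.2
    rw [hcx] at hw
    have hcU : charge ((shift ^ (-c)) x.2) = c := by rw [charge_zpow_shift, hcx]; ring
    refine mem_filter.2 ⟨mem_oddChargeConfigs.2
      ⟨hA, (odd_charge_iff ((shift ^ (-c)) x.2)).1 (hcU.symm ▸ hc), ?_⟩, hcU⟩
    have hsum' : ((∑ a ∈ x.1, a : ℕ) : ℤ) + weight x.2 = m := by rw [← hsum, Nat.cast_add]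
    have : 2 * (((∑ a ∈ x.1, a : ℕ) : ℤ) + weight ((shift ^ (-c)) x.2)) = 2 * n := by
      linear_combination hw + 2 * hsum' + hm
    dsimp only
    omega
  · exact Prod.ext rfl (by rw [zpow_neg]; exact Equiv.symm_apply_apply _ _)
  · exact Prod.ext rfl (by rw [zpow_neg]; exact Equiv.apply_symm_apply _ _)

lemma card_filter_conj_eq_self (m : ℕ) :
    #{x ∈ neutralConfigs m | (x.1, conj x.2) = x} = #(oddPartConfigs m) := by
  refine card_nbij' (fun x => (x.1, diagonalHooks x.2)) (fun y => (y.1, ofDiagonalHooks y.2))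
    (fun x hx => ?_) (fun y hy => ?_) (fun x hx => ?_) (fun y hy => ?_)
  · obtain ⟨hx, hfix⟩ := mem_filter.1 hx
    obtain ⟨hA, -, hsum⟩ := mem_neutralConfigs.1 hx
    exact mem_oddPartConfigs.2 ⟨hA, fun _ => odd_of_mem_diagonalHooks,
      by rw [sum_diagonalHooks (congrArg Prod.snd hfix)]; exact hsum⟩
  · obtain ⟨hA, hO, hsum⟩ := mem_oddPartConfigs.1 hy
    refine mem_filter.2 ⟨mem_neutralConfigs.2 ⟨hA, charge_ofDiagonalHooks hO, ?_⟩,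
      Prod.ext rfl (conj_ofDiagonalHooks _)⟩
    rw [weight_ofDiagonalHooks hO]
    exact hsum
  · exact Prod.ext rfl (ofDiagonalHooks_diagonalHooks (congrArg Prod.snd (mem_filter.1 hx).2))
  · exact Prod.ext rfl (diagonalHooks_ofDiagonalHooks (mem_oddPartConfigs.1 hy).2.1)

lemma card_neutralConfigs_modEq (m : ℕ) :
    #(neutralConfigs m) ≡ #(oddPartConfigs m) [MOD 2] := by
  have : Fact (Nat.Prime 2) := ⟨Nat.prime_two⟩
  rw [← card_filter_conj_eq_self]
  refine card_modEq_card_filter_apply_eq (fun x hx => ?_) fun x _ => Prod.ext rfl (conj_conj x.2)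
  obtain ⟨hA, hc, hsum⟩ := mem_neutralConfigs.1 hx
  have hw := weight_conj x.2
  rw [hc, sub_zero, Nat.cast_inj] at hw
  exact mem_neutralConfigs.2 ⟨hA, by rw [charge_conj, hc, neg_zero], by rw [hw]; exact hsum⟩

def swapOddParts (x : Finset ℕ × Finset ℕ) : Finset ℕ × Finset ℕ :=
  ({a ∈ x.1 | Even a} ∪ x.2, {a ∈ x.1 | Odd a})

lemma even_of_mem_filter_even {A : Finset ℕ} : ∀ a ∈ {a ∈ A | Even a}, Even a :=
  fun _ ha => (mem_filter.1 ha).2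

lemma odd_of_mem_filter_odd {A : Finset ℕ} : ∀ a ∈ {a ∈ A | Odd a}, Odd a :=
  fun _ ha => (mem_filter.1 ha).2

lemma card_oddPartConfigs_modEq (m : ℕ) :
    #(oddPartConfigs m) ≡ #{x ∈ oddPartConfigs m | swapOddParts x = x} [MOD 2] := by
  have : Fact (Nat.Prime 2) := ⟨Nat.prime_two⟩
  refine card_modEq_card_filter_apply_eq (fun x hx => ?_) (fun x hx => ?_)
  · obtain ⟨hA, hO, hsum⟩ := mem_oddPartConfigs.1 hx
    refine mem_oddPartConfigs.2 ⟨fun h0 => ?_, odd_of_mem_filter_odd, ?_⟩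
    · rcases mem_union.1 h0 with h | h
      · exact hA (mem_filter.1 h).1
      · exact Nat.not_odd_zero (hO 0 h)
    · rw [swapOddParts, sum_union (disjoint_of_even_of_odd even_of_mem_filter_even hO), ← hsum,
        ← sum_filter_even_add_sum_filter_odd x.1]
      ring
  · have hO := (mem_oddPartConfigs.1 hx).2.1
    change swapOddParts (swapOddParts x) = x
    rw [swapOddParts, swapOddParts, filter_even_union even_of_mem_filter_even hO,
      filter_odd_union even_of_mem_filter_even hO, ← filter_or,
      filter_true_of_mem fun a _ => Nat.even_or_odd a]

lemma two_mul_sum_of_swapOddParts_eq_self {m : ℕ} {x : Finset ℕ × Finset ℕ}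
    (hx : x ∈ oddPartConfigs m) (hfix : swapOddParts x = x) :
    2 * (∑ b ∈ {a ∈ x.1 | Even a}.image (· / 2), b + ∑ o ∈ x.2, o) = m := by
  have hodd : {a ∈ x.1 | Odd a} = x.2 := congrArg Prod.snd hfix
  rw [← (mem_oddPartConfigs.1 hx).2.2, mul_add, two_mul_sum_image_half even_of_mem_filter_even,
    ← sum_filter_even_add_sum_filter_odd x.1, hodd]
  ring

lemma card_filter_swapOddParts_eq_self (k : ℕ) :
    #{x ∈ oddPartConfigs (2 * k) | swapOddParts x = x} = #(oddPartConfigs k) := by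
  refine card_nbij' (fun x => ({a ∈ x.1 | Even a}.image (· / 2), x.2))
    (fun y => (y.1.image (2 * ·) ∪ y.2, y.2)) (fun x hx => ?_) (fun y hy => ?_)
    (fun x hx => ?_) (fun y hy => ?_)
  · obtain ⟨hx, hfix⟩ := mem_filter.1 hx
    obtain ⟨hA, hO, -⟩ := mem_oddPartConfigs.1 hx
    have := two_mul_sum_of_swapOddParts_eq_self hx hfix
    refine mem_oddPartConfigs.2 ⟨fun h0 => ?_, hO, by dsimp only; omega⟩
    obtain ⟨a, ha, ha0⟩ := mem_image.1 h0
    obtain ⟨haA, hae⟩ := mem_filter.1 ha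
    have := Nat.even_iff.1 hae
    exact hA (by rwa [show a = 0 by omega] at haA)
  · obtain ⟨hB, hO, hsum⟩ := mem_oddPartConfigs.1 hy
    have hE := even_of_mem_image_double (B := y.1)
    refine mem_filter.2 ⟨mem_oddPartConfigs.2 ⟨fun h0 => ?_, hO, ?_⟩, ?_⟩
    · rcases mem_union.1 h0 with h | h
      · obtain ⟨b, hb, hb0⟩ := mem_image.1 h
        exact hB (by rwa [show b = 0 by omega] at hb)
      · exact Nat.not_odd_zero (hO 0 h)
    · dsimp only
      rw [sum_union (disjoint_of_even_of_odd hE hO), sum_image_double, ← hsum]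
      ring
    · simp only [swapOddParts, filter_even_union hE hO, filter_odd_union hE hO]
  · refine Prod.ext ?_ rfl
    dsimp only
    rw [image_double_image_half even_of_mem_filter_even]
    exact congrArg Prod.fst (mem_filter.1 hx).2
  · refine Prod.ext ?_ rfl
    dsimp only
    rw [filter_even_union even_of_mem_image_double (mem_oddPartConfigs.1 hy).2.1,
      image_half_image_double]

theorem two_dvd_card_oddPartConfigs {m : ℕ} (hm : m ≠ 0) : 2 ∣ #(oddPartConfigs m) := by
  induction m using Nat.strong_induction_on with
  | _ m ih =>
    have key := card_oddPartConfigs_modEq m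
    obtain ⟨k, rfl | rfl⟩ := Nat.even_or_odd' m
    · rw [card_filter_swapOddParts_eq_self] at key
      exact (key.dvd_iff dvd_rfl).2 (ih k (by omega) (by omega))
    · rw [filter_false_of_mem fun x hx hfix => by
          have := two_mul_sum_of_swapOddParts_eq_self hx hfix; omega, card_empty] at key
      exact Nat.modEq_zero_iff_dvd.1 key

theorem two_dvd_card_distinctTriples {n : ℕ} (hn : ∀ c : ℤ, c * (c + 1) ≠ 2 * n) :
    2 ∣ #(distinctTriples n) := by
  rw [card_distinctTriples_eq, card_eq_sum_card_fiberwise fun x hx =>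
    mem_image_of_mem (fun x : Finset ℕ × Finset ℤ => charge x.2) hx]
  refine dvd_sum fun c hc => ?_
  obtain ⟨x, hx, rfl⟩ := mem_image.1 hc
  obtain ⟨-, hodd, hsum⟩ := mem_oddChargeConfigs.1 hx
  have hw := weight_zpow_shift (charge x.2) x.2
  have hm : 2 * ((∑ a ∈ x.1, a + weight ((shift ^ charge x.2) x.2) : ℕ) : ℤ) +
      charge x.2 * (charge x.2 + 1) = 2 * n := by
    rw [← hsum]
    push_cast
    linear_combination hw
  rw [card_filter_charge_eq ((odd_charge_iff _).2 hodd) hm]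
  refine ((card_neutralConfigs_modEq _).dvd_iff dvd_rfl).2
    (two_dvd_card_oddPartConfigs fun h0 => ?_)
  rw [h0, Nat.cast_zero, mul_zero, zero_add] at hm
  exact hn _ hm

end Tcount

lemma isSquare_eight_mul_add_one {N : ℕ} {c : ℤ}
    (h : c * (c + 1) = 2 * (9 * N + 1)) :
    IsSquare (8 * N + 1 : ℤ) := by
  have hsq : (2 * c + 1) ^ 2 = 9 * (8 * N + 1) := by linear_combination 4 * h
  obtain ⟨u, hu⟩ : (3 : ℤ) ∣ 2 * c + 1 :=
    Int.prime_three.dvd_of_dvd_pow (n := 2) ⟨3 * (8 * N + 1), by rw [hsq]; ring⟩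
  have h9 : 9 * (u * u) = 9 * (8 * N + 1) := by rw [← hsq, hu]; ring
  exact ⟨u, (mul_left_cancel₀ (by norm_num) h9).symm⟩

theorem stmt12_general (p : ℕ) (r : ℕ)
    (hqnr : ¬ IsSquare (((8 * r + 1 : ℕ) : ZMod p))) (n : ℕ) :
    6 ∣ Tcount 2 3 (9 * (p * n + r) + 1) := by
  rw [Tcount.two_three_eq_card_distinctTriples]
  have h3 := Tcount.three_dvd_card_distinctTriples (by omega : ¬ 3 ∣ 9 * (p * n + r) + 1)
  have h2 := Tcount.two_dvd_card_distinctTriples (n := 9 * (p * n + r) + 1) fun c hc => hqnr ?_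
  · omega
  have := (isSquare_eight_mul_add_one (N := p * n + r) (by exact_mod_cast hc)).map
    (Int.castRingHom (ZMod p))
  simpa using this

theorem stmt12 (p : ℕ) (hp : p.Prime) (hp3 : 3 ≤ p) (r : ℕ)
    (hr1 : 1 ≤ r) (hr2 : r ≤ p - 1)
    (hqnr : ¬ IsSquare (((8 * r + 1 : ℕ) : ZMod p))) (n : ℕ) :
    6 ∣ Tcount 2 3 (9 * (p * n + r) + 1) :=
  stmt12_general p r hqnr n
end
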